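/- With q1q2q3 = 1 and f(z) = exp(-∑_{n>0} (q1^n + q3^n)/(n(1+q2^{-n})) z^n) viewed as a formal power series in z, one has the identity f(z)·f(q2^{±1} z) = (1 - q1^{∓1} z)(1 - q3^{∓1} z). -/

import Mathlib

open PowerSeries

/-- Exponential of a formal power series (with zero constant term) in ℂ[[z]],
defined coefficientwise: coeff n (exp f) = ∑_{k ≤ n} coeff n (f^k) / k!. -/
noncomputable def expPS (f : PowerSeries ℂ) : PowerSeries ℂ :=
  PowerSeries.mk fun n =>
    ∑ k ∈ Finset.range (n + 1), (PowerSeries.coeff n (f ^ k)) / (Nat.factorial k)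

/-- The series f(z) = exp(-∑_{n≥1} (q1^n + q3^n)/(n(1+q2^{-n})) z^n). -/
noncomputable def fSeries (q1 q2 q3 : ℂ) : PowerSeries ℂ :=
  expPS (PowerSeries.mk fun n =>
    if n = 0 then 0 else -((q1 ^ n + q3 ^ n) / (n * (1 + (q2⁻¹) ^ n))))

/-!
Write `f = exp a`. Since `exp` turns sums into products, `f(z) f(cz) = exp (a(z) + a(cz))`.
For `c = q₂⁻¹` the `n`-th coefficient of `a(z) + a(q₂⁻¹z)` is `-(q₁ⁿ + q₃ⁿ)/n`, so the exponent is
`log (1 - q₁z) + log (1 - q₃z)`; the case `c = q₂` follows by substituting `z ↦ q₂z`, because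
`q₁q₂ = q₃⁻¹` and `q₂q₃ = q₁⁻¹`. Both `exp (a + b) = exp a · exp b` and `exp (log (1 + z)) = 1 + z`
hold because their two sides solve the same linear equation `F' = D F` with the same constant term.
-/

open scoped Nat

theorem eq_of_derivative_eq_mul {R : Type*} [CommRing R] [IsAddTorsionFree R] {D F G : R⟦X⟧}
    (hF : d⁄dX R F = D * F) (hG : d⁄dX R G = D * G)
    (h0 : constantCoeff F = constantCoeff G) : F = G := by
  ext n
  induction n using Nat.strong_induction_on with
  | _ n ih =>
    rcases n with _ | m
    · simpa using h0
    have hm : coeff m (d⁄dX R F) = coeff m (d⁄dX R G) := by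
      rw [hF, hG, coeff_mul, coeff_mul]
      refine Finset.sum_congr rfl fun p hp => ?_
      rw [ih p.2 (Finset.Nat.antidiagonal.snd_lt hp)]
    rw [coeff_derivative, coeff_derivative, mul_comm, mul_comm _ ((m : R) + 1)] at hm
    exact_mod_cast (nsmul_right_inj m.succ_ne_zero).mp (by simpa [nsmul_eq_mul] using hm)

theorem constantCoeff_rescale {R : Type*} [CommSemiring R] (c : R) (f : R⟦X⟧) :
    constantCoeff (rescale c f) = constantCoeff f := by
  rw [← coeff_zero_eq_constantCoeff_apply, coeff_rescale, pow_zero, one_mul,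
    coeff_zero_eq_constantCoeff_apply]

noncomputable def expPartial (f : ℂ⟦X⟧) (N : ℕ) : ℂ⟦X⟧ :=
  ∑ k ∈ Finset.range N, C (k ! : ℂ)⁻¹ * f ^ k

theorem X_pow_dvd_expPS_sub_expPartial {f : ℂ⟦X⟧} (hf : constantCoeff f = 0) (N : ℕ) :
    X ^ N ∣ expPS f - expPartial f N := by
  have hpow : ∀ {n k : ℕ}, n < k → coeff n (f ^ k) = 0 := fun {n k} h =>
    X_pow_dvd_iff.mp (pow_dvd_pow_of_dvd (X_dvd_iff.mpr hf) k) n h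
  refine X_pow_dvd_iff.mpr fun n hn => ?_
  rw [map_sub, sub_eq_zero, expPS, coeff_mk, expPartial, map_sum]
  simp only [coeff_C_mul, div_eq_inv_mul]
  refine Finset.sum_subset (Finset.range_subset_range.mpr hn) fun k hk hkn => ?_
  rw [Finset.mem_range] at hk hkn
  rw [hpow (by omega), mul_zero]

theorem derivative_expPartial_succ (f : ℂ⟦X⟧) (N : ℕ) :
    d⁄dX ℂ (expPartial f (N + 1)) = d⁄dX ℂ f * expPartial f N := by
  rw [expPartial, Finset.sum_range_succ', expPartial, Finset.mul_sum, map_add, map_sum]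
  simp only [Derivation.leibniz, derivative_C, derivative_pow, smul_eq_mul, mul_zero, add_zero,
    pow_zero, mul_one, Nat.add_sub_cancel]
  refine Finset.sum_congr rfl fun k _ => ?_
  have hk : ((k + 1)! : ℂ)⁻¹ * (k + 1 : ℕ) = (k ! : ℂ)⁻¹ := by
    push_cast [Nat.factorial_succ]
    field_simp
  rw [← map_natCast (C (R := ℂ)), ← hk, map_mul]
  ring

theorem derivative_expPS {f : ℂ⟦X⟧} (hf : constantCoeff f = 0) :
    d⁄dX ℂ (expPS f) = d⁄dX ℂ f * expPS f := by
  ext n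
  have htrunc : ∀ g : ℂ⟦X⟧, ∀ {m N}, m < N →
      coeff m (g * expPS f) = coeff m (g * expPartial f N) := fun g m N h => by
    rw [← sub_eq_zero, ← map_sub, ← mul_sub]
    exact X_pow_dvd_iff.mp (dvd_mul_of_dvd_right (X_pow_dvd_expPS_sub_expPartial hf N) g) m h
  calc coeff n (d⁄dX ℂ (expPS f))
      = coeff (n + 1) (1 * expPS f) * (n + 1) := by rw [coeff_derivative, one_mul]
    _ = coeff n (d⁄dX ℂ (expPartial f (n + 2))) := by
      rw [htrunc 1 (by omega : n + 1 < n + 2), one_mul, coeff_derivative]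
    _ = coeff n (d⁄dX ℂ f * expPS f) := by
      rw [derivative_expPartial_succ, htrunc _ (lt_add_one n)]

theorem constantCoeff_expPS (f : ℂ⟦X⟧) : constantCoeff (expPS f) = 1 := by
  rw [← coeff_zero_eq_constantCoeff_apply]
  simp [expPS]

theorem rescale_expPS (c : ℂ) (f : ℂ⟦X⟧) : rescale c (expPS f) = expPS (rescale c f) := by
  ext n
  simp only [expPS, coeff_rescale, coeff_mk, Finset.mul_sum, ← map_pow, mul_div_assoc]

theorem expPS_add {a b : ℂ⟦X⟧} (ha : constantCoeff a = 0) (hb : constantCoeff b = 0) :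
    expPS (a + b) = expPS a * expPS b := by
  refine eq_of_derivative_eq_mul (D := d⁄dX ℂ (a + b))
    (derivative_expPS (by rw [map_add, ha, hb, add_zero])) ?_ (by simp [constantCoeff_expPS])
  rw [Derivation.leibniz, derivative_expPS ha, derivative_expPS hb, map_add, smul_eq_mul,
    smul_eq_mul]
  ring

theorem expPS_log : expPS (log ℂ) = 1 + X := by
  refine eq_of_derivative_eq_mul (derivative_expPS constantCoeff_log) ?_
    (by simp [constantCoeff_expPS])
  have hgeom := congrArg (rescale (-1 : ℂ)) (mk_one_mul_one_sub_eq_one (S := ℂ))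
  simp only [map_mul, map_sub, map_one, map_neg, rescale_mk, rescale_X, Pi.one_apply, mul_one,
    neg_one_mul, sub_neg_eq_add] at hgeom
  simp only [deriv_log, map_add, derivative_one, derivative_X, zero_add, map_pow, map_neg,
    map_one, hgeom]

theorem expPS_rescale_log (u : ℂ) : expPS (rescale u (log ℂ)) = 1 + C u * X := by
  rw [← rescale_expPS, expPS_log, map_add, map_one, rescale_X]

theorem coeff_rescale_neg_log (q : ℂ) (n : ℕ) :
    coeff n (rescale (-q) (log ℂ)) = if n = 0 then 0 else -(q ^ n / n) := by
  rw [coeff_rescale, coeff_log]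
  split_ifs
  · rw [mul_zero]
  · have hq : (-q) ^ n * (-1) ^ n = q ^ n := by rw [← mul_pow, mul_neg_one, neg_neg]
    rw [map_div₀, map_pow, map_neg, map_one, map_natCast, pow_succ]
    linear_combination (-(n : ℂ)⁻¹) * hq

theorem expPS_mul_rescale_expPS {a : ℂ⟦X⟧} (ha : constantCoeff a = 0) {c u v : ℂ}
    (h : a + rescale c a = rescale (-u) (log ℂ) + rescale (-v) (log ℂ)) :
    expPS a * rescale c (expPS a) = (1 - C u * X) * (1 - C v * X) := by
  have hlog (w : ℂ) : constantCoeff (rescale w (log ℂ)) = 0 := by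
    rw [constantCoeff_rescale, constantCoeff_log]
  rw [rescale_expPS, ← expPS_add ha (by rwa [constantCoeff_rescale]), h,
    expPS_add (hlog _) (hlog _), expPS_rescale_log,
    expPS_rescale_log, map_neg, map_neg, neg_mul, neg_mul, ← sub_eq_add_neg, ← sub_eq_add_neg]

/-- With q1q2q3 = 1, the identity f(z)·f(q2^{±1}z) = (1 - q1^{∓1}z)(1 - q3^{∓1}z)
holds as formal power series. -/
theorem stmt1 (q1 q2 q3 : ℂ) (h123 : q1 * q2 * q3 = 1)
    (hden : ∀ n : ℕ, 0 < n → 1 + (q2⁻¹) ^ n ≠ 0) :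
    fSeries q1 q2 q3 * PowerSeries.rescale q2 (fSeries q1 q2 q3)
      = (1 - PowerSeries.C q1⁻¹ * PowerSeries.X) *
        (1 - PowerSeries.C q3⁻¹ * PowerSeries.X) ∧
    fSeries q1 q2 q3 * PowerSeries.rescale q2⁻¹ (fSeries q1 q2 q3)
      = (1 - PowerSeries.C q1 * PowerSeries.X) *
        (1 - PowerSeries.C q3 * PowerSeries.X) := by
  have hq2 : q2 ≠ 0 := by rintro rfl; simp at h123
  set a : ℂ⟦X⟧ := mk fun n => if n = 0 then 0 else -((q1 ^ n + q3 ^ n) / (n * (1 + q2⁻¹ ^ n)))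
  have ha : constantCoeff a = 0 := by
    rw [← coeff_zero_eq_constantCoeff_apply, coeff_mk, if_pos rfl]
  have hinv : a + rescale q2⁻¹ a = rescale (-q1) (log ℂ) + rescale (-q3) (log ℂ) := by
    ext n
    rw [map_add, map_add, coeff_rescale_neg_log, coeff_rescale_neg_log, coeff_rescale, coeff_mk]
    split_ifs with hn
    · simp
    have hw := hden n (Nat.pos_of_ne_zero hn)
    have hn' : (n : ℂ) ≠ 0 := Nat.cast_ne_zero.mpr hn
    generalize q2⁻¹ ^ n = w at hw ⊢
    field_simp
    ring
  have hfwd : a + rescale q2 a = rescale (-q1⁻¹) (log ℂ) + rescale (-q3⁻¹) (log ℂ) := by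
    have h1 : -q3 * q2 = -q1⁻¹ := by
      rw [neg_mul, eq_inv_of_mul_eq_one_left (by linear_combination h123 : q3 * q2 * q1 = 1)]
    have h3 : -q1 * q2 = -q3⁻¹ := by rw [neg_mul, eq_inv_of_mul_eq_one_left h123]
    simpa [rescale_rescale, hq2, h1, h3, add_comm] using congrArg (rescale q2) hinv
  exact ⟨expPS_mul_rescale_expPS ha hfwd, expPS_mul_rescale_expPS ha hinv⟩
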